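/- If a binary relation 'calls' on a finite set of predicate symbols is transitive, then there exists a level mapping m : Pred → ℤ representing the call graph; i.e., for all p, q with p calls q: m(p) > m(q) iff q does not call p, and m(p) = m(q) iff p calls q and q calls p. -/
import Mathlib


/-- For a transitive `calls` relation on a finite type of predicate symbols, there exists
a level mapping `m : Pred → ℤ` representing the call graph. -/
theorem exists_level_mapping {Pred : Type*} [Finite Pred]
    (calls : Pred → Pred → Prop) (htrans : Transitive calls) :
    ∃ m : Pred → ℤ, ∀ p q : Pred, calls p q →
      ((m p > m q ↔ ¬ calls q p) ∧ (m p = m q ↔ calls q p)) := by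
  classical
  set S : Pred → Set Pred := fun p => {x | calls p x ∧ ¬ calls x p} with hS
  refine ⟨fun p => (S p).ncard, ?_⟩
  have key : ∀ p q : Pred, calls p q → ¬ calls q p →
      ((S q).ncard : ℤ) < (S p).ncard := by
    intro p q hpq hqp
    have hsub : S q ⊂ S p := by
      constructor
      · intro x hx
        exact ⟨htrans hpq hx.1, fun hxp => hx.2 (htrans hxp hpq)⟩
      · intro hle
        have : q ∈ S p := ⟨hpq, hqp⟩
        have hq : q ∉ S q := fun h => h.2 h.1
        exact hq (hle ‹q ∈ S p›)
    exact_mod_cast Set.ncard_lt_ncard hsub (Set.toFinite _)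
  have keq : ∀ p q : Pred, calls p q → calls q p → S p = S q := by
    intro p q hpq hqp
    ext x
    constructor
    · intro hx
      exact ⟨htrans hqp hx.1, fun hxq => hx.2 (htrans hxq hqp)⟩
    · intro hx
      exact ⟨htrans hpq hx.1, fun hxp => hx.2 (htrans hxp hpq)⟩
  intro p q hpq
  by_cases hqp : calls q p
  · have : S p = S q := keq p q hpq hqp
    simp [this, hqp]
  · have hlt := key p q hpq hqp
    constructor
    · exact ⟨fun _ => hqp, fun _ => hlt⟩
    · exact ⟨fun h => absurd h hlt.ne', fun h => absurd h hqp⟩
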